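/- arXiv:0903.2096 — 3 statements merged into one kernel-verified Lean document; each statement's English description precedes it below -/
import Mathlib

section
/- Let G be a group and let S ⊆ G[x₁,…,xₙ] and S' ⊆ G[y₁,…,y_m] be two systems of equations over G. Then the algebraic sets V_G(S) and V_G(S') are isomorphic if and only if the coordinate groups G_{R(S)} and G_{R(S')} are G-isomorphic. -/
/-! Both sides are descriptions of the same data. Words `f₁, …, f_m ∈ G[X]` define a polynomial map
`Gⁿ → Gᵐ` and, dually, the substitution `G`-homomorphism `G[Y] → G[X]`, `yⱼ ↦ fⱼ`, the two being
linked by `eval v ∘ subst f = eval (polyMap f v)`. Through this identity the polynomial map sends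
`V_G(S)` into `V_G(S')` exactly when the substitution sends `R(S')` into `R(S)`, and two polynomial
maps are mutually inverse on the algebraic sets exactly when the induced maps of coordinate groups
are mutually inverse. Conversely, every `G`-homomorphism of coordinate groups is induced by a
substitution: lift the images of the variables to words. -/

/-!  Basic algebraic geometry over a group `K` (Baumslag–Miasnikov–Remeslennikov).
`GX K V = K ∗ F(V)` is the group of words in variables `V` with constants in `K`;
`eval v` is the evaluation homomorphism determined by an assignment `v : V → K`;
`VG S` is the algebraic set (solution set) of a system `S ⊆ GX K V`;
`radical S` is the radical of `S` and `Coord S = (K ∗ F(V)) ⧸ radical S`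
its coordinate group. -/

namespace EqAlg

section Defs

variable (K : Type*) [Group K] (V : Type*)

/-- `K[X]`: the group of words in variables `V` with constants from `K`,
i.e. the free product `K ∗ F(V)`. -/
abbrev GX := Monoid.Coprod K (FreeGroup V)

variable {K V}

/-- Evaluation at the assignment `v : V → K`: the unique homomorphism
`K[X] → K` restricting to the identity on `K` and sending the variable `x` to `v x`. -/
def eval (v : V → K) : GX K V →* K :=
  Monoid.Coprod.lift (MonoidHom.id K) (FreeGroup.lift v)

/-- The algebraic set `V_K(S)` of the system `S`: all assignments of the
variables killing every element of `S`. -/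
def VG (S : Set (GX K V)) : Set (V → K) := { v | ∀ w ∈ S, eval v w = 1 }

/-- The radical `R(S)`: the intersection of the kernels of all solutions of `S`
(the whole group if `S` has no solutions). -/
def radical (S : Set (GX K V)) : Subgroup (GX K V) :=
  ⨅ v ∈ VG S, (eval v).ker

instance radical_normal (S : Set (GX K V)) : (radical S).Normal := by
  constructor
  intro x hx g
  simp only [radical, Subgroup.mem_iInf] at hx ⊢
  intro v hv
  exact (MonoidHom.normal_ker (eval v)).conj_mem x (hx v hv) g

/-- The coordinate group `K_{R(S)} = K[X]/R(S)` of the system `S`. -/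
abbrev Coord (S : Set (GX K V)) := GX K V ⧸ radical S

/-- The canonical homomorphism `K[X] → K_{R(S)}`. -/
abbrev coordMk (S : Set (GX K V)) : GX K V →* Coord S := QuotientGroup.mk' (radical S)

/-- The canonical homomorphism `K → K_{R(S)}`. -/
def coordOf (S : Set (GX K V)) : K →* Coord S :=
  (coordMk S).comp Monoid.Coprod.inl

end Defs

/-- A group `K` is equationally Noetherian if every system of equations over `K`
in finitely many variables is equivalent to a finite subsystem. -/
def EquationallyNoetherian (K : Type*) [Group K] : Prop :=
  ∀ (n : ℕ) (S : Set (GX K (Fin n))), ∃ S₀ ⊆ S, S₀.Finite ∧ VG S₀ = VG S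


section Substitution

variable {K V W : Type*} [Group K]

def var (x : V) : GX K V := Monoid.Coprod.inr (FreeGroup.of x)

@[simp]
theorem eval_inl (v : V → K) (g : K) : eval v (Monoid.Coprod.inl g) = g :=
  Monoid.Coprod.lift_apply_inl _ _ _

@[simp]
theorem eval_var (v : V → K) (x : V) : eval v (var x) = v x := by
  simp [eval, var]

theorem GX.hom_ext {M : Type*} [Monoid M] {φ ψ : GX K V →* M}
    (h_inl : ∀ g : K, φ (Monoid.Coprod.inl g) = ψ (Monoid.Coprod.inl g))
    (h_var : ∀ x : V, φ (var x) = ψ (var x)) : φ = ψ :=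
  Monoid.Coprod.hom_ext (MonoidHom.ext h_inl) (FreeGroup.ext_hom _ _ h_var)

theorem mem_radical {S : Set (GX K V)} {w : GX K V} :
    w ∈ radical S ↔ ∀ v ∈ VG S, eval v w = 1 := by
  simp [radical, Subgroup.mem_iInf, MonoidHom.mem_ker]

theorem subset_radical (S : Set (GX K V)) : S ⊆ radical S :=
  fun w hw => mem_radical.2 fun _ hv => hv w hw

theorem coordMk_eq_coordMk_iff {S : Set (GX K V)} {a b : GX K V} :
    coordMk S a = coordMk S b ↔ ∀ v ∈ VG S, eval v a = eval v b := by
  simp only [QuotientGroup.mk'_apply, QuotientGroup.eq, mem_radical, map_mul, map_inv,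
    inv_mul_eq_one]

def subst (f : W → GX K V) : GX K W →* GX K V :=
  Monoid.Coprod.lift Monoid.Coprod.inl (FreeGroup.lift f)

@[simp]
theorem subst_inl (f : W → GX K V) (g : K) :
    subst f (Monoid.Coprod.inl g) = Monoid.Coprod.inl g :=
  Monoid.Coprod.lift_apply_inl _ _ _

@[simp]
theorem subst_var (f : W → GX K V) (y : W) : subst f (var y) = f y := by
  simp [subst, var]

def polyMap (f : W → GX K V) (v : V → K) : W → K := fun y => eval v (f y)

@[simp]
theorem polyMap_apply (f : W → GX K V) (v : V → K) (y : W) : polyMap f v y = eval v (f y) :=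
  rfl

theorem eval_subst (f : W → GX K V) (v : V → K) (w : GX K W) :
    eval v (subst f w) = eval (polyMap f v) w := by
  have h : (eval v).comp (subst f) = eval (polyMap f v) := by
    apply GX.hom_ext <;> simp
  exact DFunLike.congr_fun h w

variable {S : Set (GX K V)} {S' : Set (GX K W)}

theorem mapsTo_polyMap_iff {f : W → GX K V} :
    Set.MapsTo (polyMap f) (VG S) (VG S') ↔ radical S' ≤ (radical S).comap (subst f) := by
  constructor
  · intro hf w hw
    exact mem_radical.2 fun v hv => (eval_subst f v w).trans (mem_radical.1 hw _ (hf hv))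
  · intro hf v hv w hw
    rw [← eval_subst]
    exact mem_radical.1 (hf (subset_radical S' hw)) v hv

variable (S S') in
def coordMap (f : W → GX K V) (hf : radical S' ≤ (radical S).comap (subst f)) :
    Coord S' →* Coord S :=
  QuotientGroup.map _ _ (subst f) hf

theorem coordMap_coordMk {f : W → GX K V} (hf : radical S' ≤ (radical S).comap (subst f))
    (w : GX K W) : coordMap S S' f hf (coordMk S' w) = coordMk S (subst f w) :=
  rfl

theorem coordMap_coordOf {f : W → GX K V} (hf : radical S' ≤ (radical S).comap (subst f))
    (g : K) : coordMap S S' f hf (coordOf S' g) = coordOf S g :=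
  congrArg (coordMk S) (subst_inl f g)

theorem coordMap_comp_coordMap_eq_id_iff {f : W → GX K V} {h : V → GX K W}
    (hf : radical S' ≤ (radical S).comap (subst f))
    (hh : radical S ≤ (radical S').comap (subst h)) :
    (coordMap S S' f hf).comp (coordMap S' S h hh) = MonoidHom.id _ ↔
      ∀ v ∈ VG S, polyMap h (polyMap f v) = v := by
  constructor
  · intro hid v hv
    funext x
    have hx := DFunLike.congr_fun hid (coordMk S (var x))
    simp only [MonoidHom.comp_apply, coordMap_coordMk, subst_var, MonoidHom.id_apply] at hx
    simpa [eval_subst] using coordMk_eq_coordMk_iff.1 hx v hv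
  · intro hinv
    refine QuotientGroup.monoidHom_ext _ (MonoidHom.ext fun w => ?_)
    exact coordMk_eq_coordMk_iff.2 fun v hv => by rw [eval_subst, eval_subst, hinv v hv]

theorem exists_coordMap_eq (φ : Coord S' →* Coord S)
    (hφ : ∀ g, φ (coordOf S' g) = coordOf S g) : ∃ f hf, coordMap S S' f hf = φ := by
  choose f hf using fun y => QuotientGroup.mk'_surjective (radical S) (φ (coordMk S' (var y)))
  have hcomm : (coordMk S).comp (subst f) = φ.comp (coordMk S') := by
    apply GX.hom_ext
    · exact fun g => (hφ g).symm
    · intro y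
      rw [MonoidHom.comp_apply, subst_var]
      exact hf y
  have hrad : radical S' ≤ (radical S).comap (subst f) := fun w hw => by
    have hw1 : coordMk S' w = 1 := (QuotientGroup.eq_one_iff w).2 hw
    rw [Subgroup.mem_comap, ← QuotientGroup.eq_one_iff]
    exact (DFunLike.congr_fun hcomm w).trans (by rw [MonoidHom.comp_apply, hw1, map_one])
  exact ⟨f, hrad, QuotientGroup.monoidHom_ext _ hcomm⟩

end Substitution

section Morphisms

variable {G : Type*} [Group G] {n m : ℕ}

/-- `θ` is a morphism of algebraic sets `V_G(S) → V_G(S')`: on `V_G(S)` it is given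
coordinatewise by evaluation of words `f₁, …, f_m ∈ G[x₁,…,xₙ]`, and it maps
`V_G(S)` into `V_G(S')`. -/
def IsMorphism (S : Set (GX G (Fin n))) (S' : Set (GX G (Fin m)))
    (θ : (Fin n → G) → (Fin m → G)) : Prop :=
  (∃ f : Fin m → GX G (Fin n), ∀ v ∈ VG S, ∀ j, θ v j = eval v (f j)) ∧
  ∀ v ∈ VG S, θ v ∈ VG S'

/-- The algebraic sets `V_G(S)` and `V_G(S')` are isomorphic: there are mutually
inverse morphisms between them. -/
def AlgSetIsomorphic (S : Set (GX G (Fin n))) (S' : Set (GX G (Fin m))) : Prop :=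
  ∃ θ ψ, IsMorphism S S' θ ∧ IsMorphism S' S ψ ∧
    (∀ v ∈ VG S, ψ (θ v) = v) ∧ (∀ v ∈ VG S', θ (ψ v) = v)

/-- The coordinate groups of `S` and `S'` are `G`-isomorphic: there is a group
isomorphism commuting with the canonical homomorphisms from `G`. -/
def CoordGIsomorphic (S : Set (GX G (Fin n))) (S' : Set (GX G (Fin m))) : Prop :=
  ∃ e : Coord S ≃* Coord S', ∀ g : G, e (coordOf S g) = coordOf S' g

theorem IsMorphism.exists_polyMap {S : Set (GX G (Fin n))} {S' : Set (GX G (Fin m))}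
    {θ : (Fin n → G) → (Fin m → G)} (hθ : IsMorphism S S' θ) :
    ∃ f, Set.EqOn θ (polyMap f) (VG S) ∧ Set.MapsTo (polyMap f) (VG S) (VG S') := by
  obtain ⟨⟨f, hf⟩, hmaps⟩ := hθ
  have heq : Set.EqOn θ (polyMap f) (VG S) := fun v hv => funext (hf v hv)
  exact ⟨f, heq, fun v hv => heq hv ▸ hmaps v hv⟩

theorem algSetIsomorphic_iff_exists_polyMap (S : Set (GX G (Fin n)))
    (S' : Set (GX G (Fin m))) :
    AlgSetIsomorphic S S' ↔ ∃ f h, Set.MapsTo (polyMap f) (VG S) (VG S') ∧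
      Set.MapsTo (polyMap h) (VG S') (VG S) ∧ (∀ v ∈ VG S, polyMap h (polyMap f v) = v) ∧
      ∀ v ∈ VG S', polyMap f (polyMap h v) = v := by
  constructor
  · rintro ⟨θ, ψ, hθ, hψ, hψθ, hθψ⟩
    obtain ⟨f, hθf, hf⟩ := hθ.exists_polyMap
    obtain ⟨h, hψh, hh⟩ := hψ.exists_polyMap
    refine ⟨f, h, hf, hh, fun v hv => ?_, fun v hv => ?_⟩
    · rw [← hθf hv, ← hψh (hθf hv ▸ hf hv), hψθ v hv]
    · rw [← hψh hv, ← hθf (hψh hv ▸ hh hv), hθψ v hv]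
  · rintro ⟨f, h, hf, hh, hhf, hfh⟩
    exact ⟨polyMap f, polyMap h, ⟨⟨f, fun _ _ _ => rfl⟩, hf⟩, ⟨⟨h, fun _ _ _ => rfl⟩, hh⟩,
      hhf, hfh⟩

theorem coordGIsomorphic_iff_exists_coordMap (S : Set (GX G (Fin n)))
    (S' : Set (GX G (Fin m))) :
    CoordGIsomorphic S S' ↔ ∃ f h hf hh,
      (coordMap S S' f hf).comp (coordMap S' S h hh) = MonoidHom.id _ ∧
      (coordMap S' S h hh).comp (coordMap S S' f hf) = MonoidHom.id _ := by
  constructor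
  · rintro ⟨e, he⟩
    have he_symm (g : G) : e.symm (coordOf S' g) = coordOf S g := by
      rw [← he g, MulEquiv.symm_apply_apply]
    obtain ⟨f, hf, hfe⟩ := exists_coordMap_eq e.symm.toMonoidHom he_symm
    obtain ⟨h, hh, hhe⟩ := exists_coordMap_eq e.toMonoidHom he
    refine ⟨f, h, hf, hh, ?_, ?_⟩ <;> ext <;> simp [hfe, hhe]
  · rintro ⟨f, h, hf, hh, hfh, hhf⟩
    exact ⟨(coordMap S' S h hh).toMulEquiv (coordMap S S' f hf) hfh hhf, coordMap_coordOf hh⟩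

/-- Two algebraic sets over a group `G` are isomorphic if and
only if their coordinate groups are `G`-isomorphic. -/
theorem algSetIsomorphic_iff_coordGIsomorphic
    (S : Set (GX G (Fin n))) (S' : Set (GX G (Fin m))) :
    AlgSetIsomorphic S S' ↔ CoordGIsomorphic S S' := by
  rw [algSetIsomorphic_iff_exists_polyMap, coordGIsomorphic_iff_exists_coordMap]
  constructor
  · rintro ⟨f, h, hf, hh, hhf, hfh⟩
    exact ⟨f, h, mapsTo_polyMap_iff.1 hf, mapsTo_polyMap_iff.1 hh,
      (coordMap_comp_coordMap_eq_id_iff _ _).2 hhf, (coordMap_comp_coordMap_eq_id_iff _ _).2 hfh⟩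
  · rintro ⟨f, h, hf, hh, hfh, hhf⟩
    exact ⟨f, h, mapsTo_polyMap_iff.2 hf, mapsTo_polyMap_iff.2 hh,
      (coordMap_comp_coordMap_eq_id_iff _ _).1 hfh, (coordMap_comp_coordMap_eq_id_iff _ _).1 hhf⟩

end Morphisms

end EqAlg
end

section
/- Let G = G₁ ∗ G₂ be the free product of two groups and let u, v, w ∈ G satisfy u v w = 1. Then there exist elements p, q, r ∈ G, an index k ∈ {1,2}, and elements c₁, c₂, c₃ of the free factor G_k with c₁ c₂ c₃ = 1, such that u = p c₁ q⁻¹, v = q c₂ r⁻¹ and w = r c₃ p⁻¹, and each of these three products is reduced as written: |u| = |p| + |c₁| + |q|, |v| = |q| + |c₂| + |r| and |w| = |r| + |c₃| + |p|. (This is the content of the cancellation-scheme analysis: the cancellation in a product of three reduced words equal to 1 in a free product follows one of finitely many schemes, with the middle cancellation taking place in a single free factor.) -/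
/-!  Normal forms in a free product `G = G₁ ∗ G₂` (modelled as `Monoid.CoprodI M`
for a family `M : Fin 2 → Type*` of two groups).  `nf g` is the list of terms
(syllables) of the unique normal form of `g`, `len g` its length, and
`itype g` / `ttype g` are the indices of the free factors containing the first,
resp. last, term of the normal form (`none` for `g = 1`). -/

namespace FreeProdNF

open Monoid

variable {M : Fin 2 → Type*} [∀ i, Group (M i)]

open scoped Classical in
/-- The normal form of an element of the free product, as the list of its terms. -/
noncomputable def nf (g : CoprodI M) : List (Σ i, M i) :=
  (CoprodI.Word.equiv (M := M) g).toList

/-- The length `|g|` of an element of the free product. -/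
noncomputable def len (g : CoprodI M) : ℕ := (nf g).length

/-- The index of the free factor containing the first term of the normal form. -/
noncomputable def itype (g : CoprodI M) : Option (Fin 2) := (nf g).head?.map Sigma.fst

/-- The index of the free factor containing the last term of the normal form. -/
noncomputable def ttype (g : CoprodI M) : Option (Fin 2) := (nf g).getLast?.map Sigma.fst

/-! Since `w = (uv)⁻¹`, it suffices to write `u = p a q⁻¹` and `v = q b r⁻¹` with `a`, `b` in one
factor so that these products and `uv = p (ab) r⁻¹` are reduced as written; then `c₃ = (ab)⁻¹`.
This goes by induction on `|u|`. Let `s` be the last term of `u = u' s` and `t` the first term of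
`v = t v'`. If they lie in different factors, `uv` is already reduced as written. If they lie in
the same factor and `st ≠ 1`, then `uv = u' (st) v'` is reduced and `a = s`, `b = t`. If `st = 1`,
the decomposition for `(u', v')` extends to `(u, v)` by prolonging `q` by `t`. -/

open scoped Classical

section Syllables

variable {ι : Type*} {N : ι → Type*}

def IsReduced [∀ i, One (N i)] (L : List (Σ i, N i)) : Prop :=
  (∀ s ∈ L, s.2 ≠ 1) ∧ L.IsChain fun s t => s.1 ≠ t.1

lemma isReduced_append_cons_iff [∀ i, One (N i)] {L L' : List (Σ i, N i)} {i : ι} {m : N i} :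
    IsReduced (L ++ ⟨i, m⟩ :: L') ↔ IsReduced L ∧ IsReduced L' ∧ m ≠ 1 ∧
      (∀ s ∈ L.getLast?, s.1 ≠ i) ∧ ∀ s ∈ L'.head?, i ≠ s.1 := by
  simp only [IsReduced, List.mem_append, List.mem_cons, List.isChain_append, List.isChain_cons,
    List.head?_cons, Option.mem_def, Option.some.injEq]
  constructor
  · rintro ⟨hne, hL, ⟨hhead, hL'⟩, hlast⟩
    exact ⟨⟨fun s hs => hne s (.inl hs), hL⟩, ⟨fun s hs => hne s (.inr (.inr hs)), hL'⟩,
      hne _ (.inr (.inl rfl)), fun s hs => hlast s hs _ rfl, hhead⟩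
  · rintro ⟨⟨hne, hL⟩, ⟨hne', hL'⟩, hm, hlast, hhead⟩
    refine ⟨?_, hL, ⟨hhead, hL'⟩, fun s hs _ h => h ▸ hlast s hs⟩
    rintro s (hs | rfl | hs)
    exacts [hne s hs, hm, hne' s hs]

lemma isReduced_cons_iff [∀ i, One (N i)] {L : List (Σ i, N i)} {i : ι} {m : N i} :
    IsReduced (⟨i, m⟩ :: L) ↔ IsReduced L ∧ m ≠ 1 ∧ ∀ s ∈ L.head?, i ≠ s.1 := by
  simpa [IsReduced] using isReduced_append_cons_iff (L := []) (L' := L) (m := m)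

noncomputable def syllableProd [∀ i, Monoid (N i)] (L : List (Σ i, N i)) : CoprodI N :=
  (L.map fun s => CoprodI.of s.2).prod

@[simp] lemma syllableProd_nil [∀ i, Monoid (N i)] :
    syllableProd ([] : List (Σ i, N i)) = 1 :=
  rfl

@[simp] lemma syllableProd_cons [∀ i, Monoid (N i)] (s : Σ i, N i) (L : List (Σ i, N i)) :
    syllableProd (s :: L) = CoprodI.of s.2 * syllableProd L := by
  simp [syllableProd]

@[simp] lemma syllableProd_append [∀ i, Monoid (N i)] (L L' : List (Σ i, N i)) :
    syllableProd (L ++ L') = syllableProd L * syllableProd L' := by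
  simp [syllableProd]

lemma syllableProd_reverse_map_inv [∀ i, Group (N i)] (L : List (Σ i, N i)) :
    syllableProd (L.map fun s => (⟨s.1, s.2⁻¹⟩ : Σ i, N i)).reverse = (syllableProd L)⁻¹ := by
  induction L with
  | nil => simp
  | cons s L ih => simp [ih]

variable [∀ i, Monoid (N i)] [∀ i, DecidableEq (N i)]

lemma length_rcons_le {i : ι} (p : CoprodI.Word.Pair N i) :
    (CoprodI.Word.rcons p).toList.length ≤ p.tail.toList.length + 1 := by
  rw [CoprodI.Word.rcons]
  split <;> simp [CoprodI.Word.cons]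

lemma length_tail_le_length_rcons {i : ι} (p : CoprodI.Word.Pair N i) :
    p.tail.toList.length ≤ (CoprodI.Word.rcons p).toList.length := by
  rw [CoprodI.Word.rcons]
  split <;> simp [CoprodI.Word.cons]

end Syllables

lemma syllableProd_nf (g : CoprodI M) : syllableProd (nf g) = g :=
  CoprodI.Word.equiv.symm_apply_apply g

lemma isReduced_nf (g : CoprodI M) : IsReduced (nf g) :=
  ⟨(CoprodI.Word.equiv g).ne_one, (CoprodI.Word.equiv g).chain_ne⟩

lemma nf_syllableProd {L : List (Σ i, M i)} (hL : IsReduced L) : nf (syllableProd L) = L :=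
  congrArg CoprodI.Word.toList (CoprodI.Word.equiv.apply_symm_apply ⟨L, hL.1, hL.2⟩)

lemma len_syllableProd {L : List (Σ i, M i)} (hL : IsReduced L) :
    len (syllableProd L) = L.length := by
  rw [len, nf_syllableProd hL]

@[simp] lemma len_one : len (1 : CoprodI M) = 0 :=
  len_syllableProd (L := []) ⟨by simp, List.isChain_nil⟩

lemma len_of {i : Fin 2} {m : M i} (hm : m ≠ 1) : len (CoprodI.of m) = 1 := by
  simpa using len_syllableProd (L := [⟨i, m⟩]) ⟨by simpa using hm, List.isChain_singleton _⟩

lemma len_mul_of_isReduced_append {u v : CoprodI M} (h : IsReduced (nf u ++ nf v)) :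
    len (u * v) = len u + len v := by
  rw [← syllableProd_nf u, ← syllableProd_nf v, ← syllableProd_append, len_syllableProd h,
    List.length_append, syllableProd_nf, syllableProd_nf, len, len]

lemma len_of_mul_le {i : Fin 2} (m : M i) (g : CoprodI M) :
    len (CoprodI.of m * g) ≤ len g + 1 := by
  have hw := (CoprodI.Word.equivPair i).symm_apply_apply (CoprodI.Word.equiv g)
  rw [CoprodI.Word.equivPair_symm] at hw
  have htail := length_tail_le_length_rcons (CoprodI.Word.equivPair i (CoprodI.Word.equiv g))
  rw [hw] at htail
  have hmul : CoprodI.Word.equiv (CoprodI.of m * g) = CoprodI.of m • CoprodI.Word.equiv g :=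
    mul_smul (CoprodI.of m) g (CoprodI.Word.empty (M := M))
  rw [len, nf, hmul, CoprodI.Word.of_smul_def]
  exact (length_rcons_le _).trans (Nat.add_le_add_right htail 1)

lemma len_syllableProd_mul_le (L : List (Σ i, M i)) (g : CoprodI M) :
    len (syllableProd L * g) ≤ L.length + len g := by
  induction L with
  | nil => simp
  | cons s L ih =>
    rw [syllableProd_cons, mul_assoc, List.length_cons]
    have := len_of_mul_le s.2 (syllableProd L * g)
    omega

lemma len_mul_le (x y : CoprodI M) : len (x * y) ≤ len x + len y := by
  have := len_syllableProd_mul_le (nf x) y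
  rwa [syllableProd_nf] at this

lemma len_mul_mul_le (x y z : CoprodI M) : len (x * y * z) ≤ len x + len y + len z :=
  (len_mul_le _ z).trans (Nat.add_le_add_right (len_mul_le x y) _)

lemma len_inv_le (g : CoprodI M) : len g⁻¹ ≤ len g := by
  have := len_syllableProd_mul_le ((nf g).map fun s => (⟨s.1, s.2⁻¹⟩ : Σ i, M i)).reverse 1
  rwa [mul_one, syllableProd_reverse_map_inv, syllableProd_nf, List.length_reverse,
    List.length_map, len_one, add_zero] at this

@[simp] lemma len_inv (g : CoprodI M) : len g⁻¹ = len g :=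
  (len_inv_le g).antisymm (by simpa using len_inv_le g⁻¹)

def HasCancellationScheme (u v : CoprodI M) : Prop :=
  ∃ (k : Fin 2) (a b : M k) (p q r : CoprodI M),
    u = p * CoprodI.of a * q⁻¹ ∧ v = q * CoprodI.of b * r⁻¹ ∧
    len u = len p + len (CoprodI.of a) + len q ∧
    len v = len q + len (CoprodI.of b) + len r ∧
    len (u * v) = len p + len (CoprodI.of (a * b)) + len r

namespace HasCancellationScheme

lemma of_len_mul {u v : CoprodI M} (h : len (u * v) = len u + len v) :
    HasCancellationScheme u v :=
  ⟨0, 1, 1, u, 1, v⁻¹, by simp, by simp, by simp, by simp, by simpa using h⟩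

lemma of_mul_ne_one {L L' : List (Σ i, M i)} {i : Fin 2} {a b : M i}
    (hLa : IsReduced (L ++ [⟨i, a⟩])) (hbL' : IsReduced (⟨i, b⟩ :: L')) (hab : a * b ≠ 1) :
    HasCancellationScheme (syllableProd L * CoprodI.of a) (CoprodI.of b * syllableProd L') := by
  obtain ⟨hL, -, ha, hlast, -⟩ := isReduced_append_cons_iff.mp hLa
  obtain ⟨hL', hb, hhead⟩ := isReduced_cons_iff.mp hbL'
  have habL := isReduced_append_cons_iff.mpr ⟨hL, hL', hab, hlast, hhead⟩
  have hu : syllableProd L * CoprodI.of a = syllableProd (L ++ [⟨i, a⟩]) := by simp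
  have hv : CoprodI.of b * syllableProd L' = syllableProd (⟨i, b⟩ :: L') := by simp
  have huv : syllableProd L * CoprodI.of a * (CoprodI.of b * syllableProd L') =
      syllableProd (L ++ ⟨i, a * b⟩ :: L') := by
    simp [mul_assoc]
  refine ⟨i, a, b, syllableProd L, 1, (syllableProd L')⁻¹, by simp, by simp, ?_, ?_, ?_⟩
  · rw [hu, len_syllableProd hLa, len_syllableProd hL, len_of ha]
    simp
  · rw [hv, len_syllableProd hbL', len_inv, len_syllableProd hL', len_of hb]
    simp [add_comm]
  · rw [huv, len_syllableProd habL, len_syllableProd hL, len_inv, len_syllableProd hL',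
      len_of hab, List.length_append, List.length_cons]
    ring

lemma extend {u v : CoprodI M} (h : HasCancellationScheme u v) {i : Fin 2} (m : M i)
    (hu : len (u * CoprodI.of m⁻¹) = len u + 1) (hv : len (CoprodI.of m * v) = len v + 1) :
    HasCancellationScheme (u * CoprodI.of m⁻¹) (CoprodI.of m * v) := by
  obtain ⟨k, a, b, p, q, r, rfl, rfl, hlu, hlv, hluv⟩ := h
  have hu' : p * CoprodI.of a * q⁻¹ * CoprodI.of m⁻¹ =
      p * CoprodI.of a * (CoprodI.of m * q)⁻¹ := by
    simp [mul_assoc]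
  have hv' : CoprodI.of m * (q * CoprodI.of b * r⁻¹) =
      CoprodI.of m * q * CoprodI.of b * r⁻¹ := by
    simp [mul_assoc]
  have hmq : len (CoprodI.of m * q) = len q + 1 := by
    have h₁ := len_mul_mul_le p (CoprodI.of a) (CoprodI.of m * q)⁻¹
    rw [← hu', hu, hlu, len_inv] at h₁
    have h₂ := len_of_mul_le m q
    omega
  refine ⟨k, a, b, p, CoprodI.of m * q, r, hu', hv', by omega, by omega, ?_⟩
  rw [← hluv]
  congr 1
  simp [mul_assoc]

end HasCancellationScheme

theorem hasCancellationScheme (u v : CoprodI M) : HasCancellationScheme u v := by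
  induction hn : len u using Nat.strong_induction_on generalizing u v with
  | _ n ih =>
  obtain hU | ⟨U, ⟨i, s⟩, hU⟩ := List.eq_nil_or_concat (nf u)
  · have : u = 1 := by rw [← syllableProd_nf u, hU, syllableProd_nil]
    exact .of_len_mul (by simp [this])
  rcases hV : nf v with _ | ⟨⟨j, t⟩, V⟩
  · have : v = 1 := by rw [← syllableProd_nf v, hV, syllableProd_nil]
    exact .of_len_mul (by simp [this])
  rw [List.concat_eq_append] at hU
  have hUs : IsReduced (U ++ [⟨i, s⟩]) := hU ▸ isReduced_nf u
  have htV : IsReduced (⟨j, t⟩ :: V) := hV ▸ isReduced_nf v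
  obtain ⟨hU', -, hs, hlast, -⟩ := isReduced_append_cons_iff.mp hUs
  have hu : u = syllableProd U * CoprodI.of s := by rw [← syllableProd_nf u, hU]; simp
  have hv : v = CoprodI.of t * syllableProd V := by rw [← syllableProd_nf v, hV]; simp
  by_cases hij : i = j
  swap
  · refine .of_len_mul (len_mul_of_isReduced_append ?_)
    rw [hU, hV, List.append_assoc]
    exact isReduced_append_cons_iff.mpr ⟨hU', htV, hs, hlast, by simpa using hij⟩
  subst hij
  by_cases hst : s * t = 1
  · obtain rfl : s = t⁻¹ := eq_inv_of_mul_eq_one_left hst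
    have hlU : len (syllableProd U * CoprodI.of t⁻¹) = len (syllableProd U) + 1 := by
      rw [← hu, len, hU, len_syllableProd hU', List.length_append, List.length_singleton]
    have hlV : len (CoprodI.of t * syllableProd V) = len (syllableProd V) + 1 := by
      rw [← hv, len, hV, len_syllableProd (isReduced_cons_iff.mp htV).1, List.length_cons]
    rw [hu, hlU] at hn
    rw [hu, hv]
    exact (ih _ (by omega) (syllableProd U) (syllableProd V) rfl).extend t hlU hlV
  · exact hu ▸ hv ▸ .of_mul_ne_one hUs htV hst

/-- (Cancellation scheme for a triangle.)  If `u * v * w = 1` in a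
free product `G = G₁ ∗ G₂`, then there are elements `p q r` of `G`, an index
`k ∈ {1,2}` and elements `c₁ c₂ c₃` of the free factor `G_k` with `c₁c₂c₃ = 1`,
such that `u = p c₁ q⁻¹`, `v = q c₂ r⁻¹`, `w = r c₃ p⁻¹`, each product being
reduced as written. -/
theorem triangle_cancellation (u v w : CoprodI M) (h : u * v * w = 1) :
    ∃ (k : Fin 2) (c₁ c₂ c₃ : M k) (p q r : CoprodI M),
      c₁ * c₂ * c₃ = 1 ∧
      u = p * CoprodI.of c₁ * q⁻¹ ∧
      v = q * CoprodI.of c₂ * r⁻¹ ∧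
      w = r * CoprodI.of c₃ * p⁻¹ ∧
      len u = len p + len (CoprodI.of c₁ : CoprodI M) + len q ∧
      len v = len q + len (CoprodI.of c₂ : CoprodI M) + len r ∧
      len w = len r + len (CoprodI.of c₃ : CoprodI M) + len p := by
  obtain ⟨k, a, b, p, q, r, hu, hv, hlu, hlv, hluv⟩ := hasCancellationScheme u v
  have hw : w = (u * v)⁻¹ := eq_inv_of_mul_eq_one_right h
  refine ⟨k, a, b, (a * b)⁻¹, p, q, r, mul_inv_cancel (a * b), hu, hv, ?_, hlu, hlv, ?_⟩
  · simp [hw, hu, hv, mul_assoc]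
  · rw [hw, len_inv, hluv, map_inv, len_inv]
    ring

end FreeProdNF
end

section
/- Let G be an equationally Noetherian group and let n ≥ 1. Then there is no infinite strictly descending chain V₀ ⊋ V₁ ⊋ V₂ ⊋ ⋯ of algebraic subsets of Gⁿ; that is, every descending chain of algebraic subsets of Gⁿ stabilises. (Equivalently, every strictly ascending chain of radical subgroups of G[x₁,…,xₙ] is finite; this is the Noetherian property of the Zariski topology used to guarantee that the iterated construction of solution trees terminates.) -/
/-!  Basic algebraic geometry over a group `K` (Baumslag–Miasnikov–Remeslennikov).
`GX K V = K ∗ F(V)` is the group of words in variables `V` with constants in `K`;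
`eval v` is the evaluation homomorphism determined by an assignment `v : V → K`;
`VG S` is the algebraic set (solution set) of a system `S ⊆ GX K V`;
`radical S` is the radical of `S` and `Coord S = (K ∗ F(V)) ⧸ radical S`
its coordinate group. -/

namespace EqAlg

/-! The intersection of all members of the chain is the solution set of the union of their
defining systems. A finite equivalent subsystem draws on only finitely many members, so the
chain is constant from the largest of their indices on. -/

theorem VG_antitone {K V : Type*} [Group K] {S T : Set (GX K V)} (h : S ⊆ T) :
    VG T ⊆ VG S :=
  fun _ hv w hw => hv w (h hw)

theorem VG_iUnion {K V : Type*} {ι : Sort*} [Group K] (S : ι → Set (GX K V)) :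
    VG (⋃ i, S i) = ⋂ i, VG (S i) := by
  ext v
  simp only [VG, Set.mem_iUnion, Set.mem_iInter, Set.mem_ofPred_eq, forall_exists_index]
  exact forall_comm

theorem EquationallyNoetherian.exists_finite_biInter_eq_iInter {G ι : Type*} [Group G]
    (hG : EquationallyNoetherian G) {n : ℕ} {X : ι → Set (Fin n → G)}
    (hX : ∀ i, ∃ S : Set (GX G (Fin n)), X i = VG S) :
    ∃ I : Set ι, I.Finite ∧ ⋂ i ∈ I, X i = ⋂ i, X i := by
  choose S hS using hX
  obtain ⟨S₀, hS₀, hS₀fin, hVG⟩ := hG n (⋃ i, S i)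
  obtain ⟨I, hIfin, hI⟩ := Set.finite_subset_iUnion hS₀fin hS₀
  refine ⟨I, hIfin, (Set.iInter_subset_iInter₂ _ X).antisymm' ?_⟩
  calc ⋂ i ∈ I, X i = VG (⋃ i ∈ I, S i) := by simp only [hS, VG_iUnion]
    _ ⊆ VG S₀ := VG_antitone hI
    _ = ⋂ i, X i := by rw [hVG, VG_iUnion, ← funext hS]

theorem descending_chain_of_algebraic_sets_stabilises_general
    {G : Type*} [Group G] (hG : EquationallyNoetherian G)
    (n : ℕ) (V : ℕ → Set (Fin n → G))
    (halg : ∀ m, ∃ S : Set (GX G (Fin n)), V m = VG S)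
    (hdesc : ∀ m, V (m + 1) ⊆ V m) :
    ∃ N, ∀ m, N ≤ m → V m = V N := by
  have hanti : Antitone V := antitone_nat_of_succ_le hdesc
  obtain ⟨I, hIfin, hI⟩ := hG.exists_finite_biInter_eq_iInter halg
  obtain ⟨N, hN⟩ := hIfin.bddAbove
  refine ⟨N, fun m hm => (hanti hm).antisymm ?_⟩
  calc V N ⊆ ⋂ i ∈ I, V i := Set.subset_iInter₂ fun i hi => hanti (hN hi)
    _ = ⋂ i, V i := hI
    _ ⊆ V m := Set.iInter_subset V m

/-- Over an equationally Noetherian group `G`, every descending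
chain of algebraic subsets of `Gⁿ` stabilises; in particular there is no
infinite strictly descending chain of algebraic sets. -/
theorem descending_chain_of_algebraic_sets_stabilises
    {G : Type*} [Group G] (hG : EquationallyNoetherian G)
    (n : ℕ) (hn : 1 ≤ n) (V : ℕ → Set (Fin n → G))
    (halg : ∀ m, ∃ S : Set (GX G (Fin n)), V m = VG S)
    (hdesc : ∀ m, V (m + 1) ⊆ V m) :
    ∃ N, ∀ m, N ≤ m → V m = V N :=
  descending_chain_of_algebraic_sets_stabilises_general hG n V halg hdesc

end EqAlg
end
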